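/- Let Δ ⊂ ℝⁿ be a Delzant polytope and let 𝔉 be a finite family of admissible simplices in Δ with pairwise distinct centers. Fix Σ ∈ 𝔉 with center the vertex v, and let e_v^1, …, e_v^n be the edges of Δ meeting v. Then Σ is disjoint from every other member of 𝔉 if and only if for every other Σ' ∈ 𝔉 and every j ∈ {1,…,n}, the set cl(Σ) ∩ cl(Σ') ∩ e_v^j contains at most one point (where cl denotes closure in ℝⁿ). -/

import Mathlib

open Set MeasureTheory Pointwise

noncomputable section

/-- Points of `ℝⁿ`. -/
abbrev Pt (n : ℕ) := Fin n → ℝ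

/-- Cast an integer vector to a real point. -/
def ivec {n : ℕ} (u : Fin n → ℤ) : Pt n := fun j => (u j : ℝ)

/-- `f` is an affine transformation of `ℝⁿ` whose linear part lies in `GL(n, ℤ)`. -/
def IsAGLZ {n : ℕ} (f : Pt n → Pt n) : Prop :=
  ∃ (A : Matrix (Fin n) (Fin n) ℤ) (b : Pt n),
    IsUnit A.det ∧ ∀ x : Pt n, ∀ i, f x i = (∑ j, (A i j : ℝ) * x j) + b i

/-- The `i`-th standard basis vector of `ℝⁿ`. -/
def stdVec {n : ℕ} (i : Fin n) : Pt n := fun j => if j = i then 1 else 0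

/-- The half-open model simplex `Δ(r^{1/2})`: the convex hull of `0, r•e₁, …, r•eₙ`
with the convex hull of `r•e₁, …, r•eₙ` (the facet not containing the origin) removed. -/
def modelSimplex (n : ℕ) (r : ℝ) : Set (Pt n) :=
  convexHull ℝ (insert 0 (Set.range fun i : Fin n => r • stdVec i)) \
    convexHull ℝ (Set.range fun i : Fin n => r • stdVec i)

/-- `e` is an edge of the convex polytope `Δ`: a one-dimensional face, i.e. a nondegenerate
segment which is an extreme subset of `Δ`. -/
def IsEdge {n : ℕ} (Δ e : Set (Pt n)) : Prop :=
  ∃ v w : Pt n, v ≠ w ∧ e = segment ℝ v w ∧ IsExtreme ℝ Δ e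

/-- `Δ ⊆ ℝⁿ` is a Delzant polytope: a compact convex polytope (compact convex set with
finitely many extreme points) of full dimension `n`, such that at every vertex `v` the edges
emanating from `v` are exactly `n` segments of the form `[v, v + tᵢ • uᵢ]` with `tᵢ > 0` and
`u₁, …, uₙ` a `ℤ`-basis of `ℤⁿ`. -/
def IsDelzant {n : ℕ} (Δ : Set (Pt n)) : Prop :=
  IsCompact Δ ∧ Convex ℝ Δ ∧ (interior Δ).Nonempty ∧
  (Set.extremePoints ℝ Δ).Finite ∧ (Set.extremePoints ℝ Δ).Nonempty ∧
  ∀ v ∈ Set.extremePoints ℝ Δ,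
    ∃ (u : Fin n → Fin n → ℤ) (t : Fin n → ℝ),
      IsUnit (Matrix.det (Matrix.of u)) ∧ (∀ i, 0 < t i) ∧
      (∀ i, IsEdge Δ (segment ℝ v (v + t i • ivec (u i)))) ∧
      ∀ e, IsEdge Δ e → v ∈ e → ∃ i, e = segment ℝ v (v + t i • ivec (u i))

/-- `S ⊆ Δ` is an admissible simplex of radius `r` with center the vertex `v`: the image of
the model simplex `Δ(r^{1/2})` under an element of `AGL(n, ℤ)` taking the origin to `v` and
the edges of the model simplex at the origin into the edges of `Δ` meeting `v`. -/
def IsAdmissibleSimplex {n : ℕ} (Δ : Set (Pt n)) (v : Pt n) (r : ℝ)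
    (S : Set (Pt n)) : Prop :=
  0 < r ∧ S ⊆ Δ ∧
  ∃ f : Pt n → Pt n, IsAGLZ f ∧ f 0 = v ∧
    (∀ i : Fin n, ∃ e, IsEdge Δ e ∧ v ∈ e ∧ f '' segment ℝ 0 (r • stdVec i) ⊆ e) ∧
    S = f '' modelSimplex n r

/-- `r_v`: the maximal radius of an admissible simplex with center `v`. -/
def maxRadius {n : ℕ} (Δ : Set (Pt n)) (v : Pt n) : ℝ :=
  sSup {r : ℝ | ∃ S, IsAdmissibleSimplex Δ v r S}

/-- `P` is an admissible packing of `Δ`: a disjoint union of admissible simplices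
(of possibly varying radii) contained in `Δ`. -/
def IsAdmissiblePacking {n : ℕ} (Δ P : Set (Pt n)) : Prop :=
  ∃ 𝒮 : Set (Set (Pt n)),
    (∀ S ∈ 𝒮, ∃ v ∈ Set.extremePoints ℝ Δ, ∃ r : ℝ, IsAdmissibleSimplex Δ v r S) ∧
    𝒮.PairwiseDisjoint id ∧ P = ⋃₀ 𝒮

/-- The density `vol(P)/vol(Δ)` of a packing `P` of `Δ` (Euclidean volume). -/
def packDensity {n : ℕ} (Δ P : Set (Pt n)) : ℝ := (volume P).toReal / (volume Δ).toReal

/-- The maximal density `Ω(Δ)` of admissible packings of `Δ`. -/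
def maxDensity {n : ℕ} (Δ : Set (Pt n)) : ℝ :=
  sSup {d : ℝ | ∃ P, IsAdmissiblePacking Δ P ∧ d = packDensity Δ P}

/-- Two Delzant polytopes are equivalent if a positive rescaling of the first lies in the
`AGL(n, ℤ)`-orbit of the second. -/
def DelzantEquiv {n : ℕ} (Δ₁ Δ₂ : Set (Pt n)) : Prop :=
  ∃ (c : ℝ) (f : Pt n → Pt n), 0 < c ∧ IsAGLZ f ∧ f '' (c • Δ₁) = Δ₂

/-!
In the chart `x = L⁻¹ (z - w)` of an admissible simplex `S` with centre `w`, `S` is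
`{x ≥ 0, ∑ xᵢ < r}` and its closure is `{x ≥ 0, ∑ xᵢ ≤ r}`. For `n ≥ 2` the centre is a vertex of
`Δ` (two edges of `S` lie on edges of `Δ` meeting only at `w`). At a vertex, `Δ` lies in the cone
spanned by its edges, and for a Delzant polytope these are exactly the `n` edges along which the
edges of `S` run; so `Δ` lies in the orthant `{x ≥ 0}` of the chart, and `S = Δ ∩ {∑ xᵢ < r}` is
relatively open in `Δ`.

If two points of `cl S₀ ∩ cl S` lie on an edge through `v`, the level `∑ xᵢ` of `S₀`, which is
injective along that edge, is `< r₀` at one of them; that point lies in `cl S`, and as `S₀` is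
relatively open in `Δ`, `S` meets `S₀`. Conversely, if `p ∈ S₀ ∩ S`, the affine level of `S` is
`< r` at `p ∈ cl S₀`, hence at some vertex of `cl S₀`; moving slightly along an edge of `S₀` from
there keeps it `< r`, which gives two points of `cl S₀ ∩ cl S` on an edge of `Δ` through `v`.

In dimension one the centres need not be vertices, and everything is a statement about intervals.
-/

section ModelSimplex

variable {n : ℕ}

lemma stdVec_eq_single (i : Fin n) : stdVec i = Pi.single i 1 := by
  ext j
  simp [stdVec, Pi.single_apply]

lemma stdVec_nonneg (i : Fin n) : 0 ≤ stdVec i := by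
  simp [stdVec_eq_single, Pi.single_nonneg]

lemma sum_smul_stdVec {n : ℕ} (x : Pt n) : ∑ i, x i • stdVec i = x := by
  ext j
  simp [stdVec, Finset.sum_apply]

def coordSum (n : ℕ) : Pt n →ₗ[ℝ] ℝ where
  toFun x := ∑ i, x i
  map_add' x y := by simp [Finset.sum_add_distrib]
  map_smul' c x := by simp [Finset.mul_sum]

lemma coordSum_apply (x : Pt n) : coordSum n x = ∑ i, x i := rfl

@[simp]
lemma coordSum_stdVec (i : Fin n) : coordSum n (stdVec i) = 1 := by
  simp [coordSum_apply, stdVec_eq_single]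

lemma coordSum_nonneg {x : Pt n} (hx : 0 ≤ x) : 0 ≤ coordSum n x :=
  show 0 ≤ ∑ i, x i from Finset.sum_nonneg fun i _ => hx i

lemma continuous_coordSum : Continuous (coordSum n) :=
  (coordSum n).continuous_of_finiteDimensional

def closedModelSimplex (n : ℕ) (r : ℝ) : Set (Pt n) := {x | 0 ≤ x ∧ coordSum n x ≤ r}

lemma convex_closedModelSimplex (n : ℕ) (r : ℝ) : Convex ℝ (closedModelSimplex n r) :=
  (convex_Ici 0).inter ((convex_Iic r).linear_preimage (coordSum n))

lemma isClosed_closedModelSimplex (n : ℕ) (r : ℝ) : IsClosed (closedModelSimplex n r) :=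
  isClosed_Ici.inter (isClosed_le continuous_coordSum continuous_const)

lemma convexHull_range_smul_stdVec {r : ℝ} (hr : 0 < r) :
    convexHull ℝ (range fun i : Fin n => r • stdVec i) = {x | 0 ≤ x ∧ coordSum n x = r} := by
  classical
  have hbasis : (range fun i : Fin n => stdVec i) = range fun i j => if i = j then 1 else 0 := by
    congr 1
    ext i j
    simp [stdVec, eq_comm]
  ext x
  rw [← smul_set_range, convexHull_smul, hbasis, convexHull_basis_eq_stdSimplex,
    mem_smul_set_iff_inv_smul_mem₀ hr.ne']
  simp only [stdSimplex, mem_ofPred_eq, Pi.smul_apply, smul_eq_mul, ← Finset.mul_sum,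
    Pi.le_def, Pi.zero_apply, coordSum_apply]
  constructor
  · rintro ⟨h0, h1⟩
    refine ⟨fun i => ?_, ?_⟩
    · simpa [hr] using h0 i
    · field_simp at h1; linarith
  · rintro ⟨h0, h1⟩
    exact ⟨fun i => mul_nonneg (inv_nonneg.2 hr.le) (h0 i), by rw [h1, inv_mul_cancel₀ hr.ne']⟩

lemma convexHull_insert_zero_range_smul_stdVec {r : ℝ} (hr : 0 < r) :
    convexHull ℝ (insert 0 (range fun i : Fin n => r • stdVec i)) = closedModelSimplex n r := by
  refine (convexHull_min ?_ (convex_closedModelSimplex n r)).antisymm fun x ⟨hx, hxr⟩ => ?_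
  · rintro _ (rfl | ⟨i, rfl⟩)
    · simp [closedModelSimplex, hr.le]
    · exact ⟨smul_nonneg hr.le (stdVec_nonneg i), by simp⟩
  have h0 : (0 : Pt n) ∈ convexHull ℝ (insert 0 (range fun i : Fin n => r • stdVec i)) :=
    subset_convexHull ℝ _ (mem_insert _ _)
  rcases (coordSum_nonneg hx).eq_or_lt with hs | hs
  · obtain rfl : x = 0 := funext fun i =>
      (Finset.sum_eq_zero_iff_of_nonneg fun i _ => hx i).1 (hs.trans (coordSum_apply x)).symm
        i (Finset.mem_univ i)
    exact h0
  have hy : (r / coordSum n x) • x ∈ convexHull ℝ (range fun i : Fin n => r • stdVec i) := by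
    rw [convexHull_range_smul_stdVec hr]
    refine ⟨smul_nonneg (by positivity) hx, ?_⟩
    rw [map_smul, smul_eq_mul, div_mul_cancel₀ _ hs.ne']
  have hx' : x = (coordSum n x / r) • (r / coordSum n x) • x := by
    rw [smul_smul, div_mul_div_cancel₀ hr.ne', div_self hs.ne', one_smul]
  rw [hx']
  exact (convex_convexHull ℝ _).smul_mem_of_zero_mem h0 (convexHull_mono (subset_insert _ _) hy)
    ⟨by positivity, (div_le_one hr).2 hxr⟩

lemma modelSimplex_eq {r : ℝ} (hr : 0 < r) :
    modelSimplex n r = {x | 0 ≤ x ∧ coordSum n x < r} := by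
  ext x
  simp only [modelSimplex, convexHull_insert_zero_range_smul_stdVec hr,
    convexHull_range_smul_stdVec hr, closedModelSimplex, Set.mem_sdiff, mem_ofPred_eq, not_and]
  exact ⟨fun ⟨⟨hx, hxr⟩, h⟩ => ⟨hx, hxr.lt_of_ne (h hx)⟩,
    fun ⟨hx, hxr⟩ => ⟨⟨hx, hxr.le⟩, fun _ => hxr.ne⟩⟩

lemma closure_modelSimplex {r : ℝ} (hr : 0 < r) :
    closure (modelSimplex n r) = closedModelSimplex n r := by
  rw [modelSimplex_eq hr]
  have hsub : {x | 0 ≤ x ∧ coordSum n x < r} ⊆ closedModelSimplex n r := fun x hx =>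
    ⟨hx.1, hx.2.le⟩
  refine (closure_minimal hsub (isClosed_closedModelSimplex n r)).antisymm fun x hx => ?_
  refine closure_mono ?_ (segment_subset_closure_openSegment (right_mem_segment ℝ 0 x))
  rintro _ ⟨a, b, ha, hb, hab, rfl⟩
  rw [smul_zero, zero_add]
  refine ⟨smul_nonneg hb.le hx.1, ?_⟩
  rw [map_smul, smul_eq_mul]
  nlinarith [hx.2]

end ModelSimplex

section VertexCone

variable {E : Type*}

lemma exists_smul_eq_of_add_mem_segment [AddCommGroup E] [Module ℝ E] {w x y : E}
    (h : w + x ∈ segment ℝ w (w + y)) : ∃ θ ∈ Icc (0 : ℝ) 1, x = θ • y := by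
  rw [segment_eq_image'] at h
  obtain ⟨θ, hθ, hθx⟩ := h
  exact ⟨θ, hθ, add_left_cancel (hθx.symm.trans (by rw [add_sub_cancel_left]))⟩

lemma exists_sub_eq_smul_of_mem_segment [AddCommGroup E] [Module ℝ E] {a b p q : E}
    (hp : p ∈ segment ℝ a b) (hq : q ∈ segment ℝ a b) : ∃ t : ℝ, q - p = t • (b - a) := by
  rw [segment_eq_image'] at hp hq
  obtain ⟨tp, -, rfl⟩ := hp
  obtain ⟨tq, -, rfl⟩ := hq
  exact ⟨tq - tp, by module⟩

lemma Convex.convex_setOf_sub_eq_smul [AddCommGroup E] [Module ℝ E] {B : Set E}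
    (hB : Convex ℝ B) (w : E) : Convex ℝ {z | ∃ t : ℝ, 0 ≤ t ∧ ∃ c ∈ B, z - w = t • c} := by
  rintro z₁ ⟨t₁, ht₁, c₁, hc₁, h₁⟩ z₂ ⟨t₂, ht₂, c₂, hc₂, h₂⟩ a b ha hb hab
  obtain ⟨c, hc, h⟩ := hB.exists_mem_add_smul_eq hc₁ hc₂ (mul_nonneg ha ht₁) (mul_nonneg hb ht₂)
  refine ⟨a * t₁ + b * t₂, by positivity, c, hc, ?_⟩
  rw [h, mul_smul, mul_smul, ← h₁, ← h₂]
  match_scalars <;> linarith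

lemma convexHull_extremePoints_of_finite [NormedAddCommGroup E] [NormedSpace ℝ E] {Δ : Set E}
    (hcomp : IsCompact Δ) (hconv : Convex ℝ Δ) (hfin : (Δ.extremePoints ℝ).Finite) :
    convexHull ℝ (Δ.extremePoints ℝ) = Δ := by
  have h := closure_convexHull_extremePoints hcomp hconv
  rwa [(hfin.isClosed_convexHull (𝕜 := ℝ)).closure_eq] at h

lemma exists_vertexFigure [NormedAddCommGroup E] [NormedSpace ℝ E] {Δ : Set E}
    (hconv : Convex ℝ Δ) (hfin : (Δ.extremePoints ℝ).Finite) {w : E}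
    (hw : w ∈ Δ.extremePoints ℝ) :
    ∃ (χ : E →ₗ[ℝ] ℝ) (Y : Set E), Y.Finite ∧
      (∀ y ∈ Y, χ y = 1 ∧ ∃ t : ℝ, 0 < t ∧ w + t • y ∈ Δ) ∧
      ∀ p ∈ Δ.extremePoints ℝ, p ≠ w → ∃ t : ℝ, 0 < t ∧ ∃ y ∈ Y, p - w = t • y := by
  set E' := Δ.extremePoints ℝ \ {w}
  have hE' : E'.Finite := hfin.subset sdiff_subset
  have hwE' : w ∉ convexHull ℝ E' := fun h =>
    (convexHull_min (t := Δ \ {w}) (fun p hp => ⟨extremePoints_subset hp.1, hp.2⟩)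
      (hconv.mem_extremePoints_iff_convex_sdiff.1 hw).2 h).2 rfl
  obtain ⟨χ, u, hχw, hχ⟩ := geometric_hahn_banach_point_closed (convex_convexHull ℝ E')
    (hE'.isClosed_convexHull (𝕜 := ℝ)) hwE'
  have hpos : ∀ p ∈ E', 0 < χ (p - w) := fun p hp => by
    rw [map_sub]
    linarith [hχ p (subset_convexHull ℝ E' hp)]
  have hpY : ∀ p ∈ E', p - w = χ (p - w) • (χ (p - w))⁻¹ • (p - w) := fun p hp => by
    rw [smul_smul, mul_inv_cancel₀ (hpos p hp).ne', one_smul]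
  refine ⟨χ, (fun p => (χ (p - w))⁻¹ • (p - w)) '' E', hE'.image _, ?_,
    fun p hp hpw => ⟨χ (p - w), hpos p ⟨hp, hpw⟩, _, ⟨p, ⟨hp, hpw⟩, rfl⟩, hpY p ⟨hp, hpw⟩⟩⟩
  rintro _ ⟨p, hp, rfl⟩
  refine ⟨?_, _, hpos p hp, ?_⟩
  · rw [ContinuousLinearMap.coe_coe, map_smul, smul_eq_mul, inv_mul_cancel₀ (hpos p hp).ne']
  · rw [← hpY p hp, add_sub_cancel]
    exact extremePoints_subset hp.1

lemma isExtreme_inter_ray [AddCommGroup E] [Module ℝ E] {Δ B : Set E} {w b : E}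
    (χ : E →ₗ[ℝ] ℝ) (hχ : ∀ c ∈ B, χ c = 1)
    (hcone : ∀ z ∈ Δ, ∃ t : ℝ, 0 ≤ t ∧ ∃ c ∈ B, z - w = t • c) (hb : b ∈ B.extremePoints ℝ) :
    IsExtreme ℝ Δ {z ∈ Δ | ∃ s : ℝ, 0 ≤ s ∧ z - w = s • b} := by
  refine ⟨fun z hz => hz.1, fun x₁ hx₁ x₂ hx₂ z ⟨_, s, _, hzs⟩ ⟨a, c, ha, hc, hac, hz⟩ =>
    ⟨hx₁, ?_⟩⟩
  obtain ⟨u₁, hu₁, c₁, hc₁, h₁⟩ := hcone x₁ hx₁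
  obtain ⟨u₂, hu₂, c₂, hc₂, h₂⟩ := hcone x₂ hx₂
  have hsum : (a * u₁) • c₁ + (c * u₂) • c₂ = s • b := by
    rw [← hzs, ← hz, mul_smul, mul_smul, ← h₁, ← h₂]
    match_scalars <;> linarith
  have hs : a * u₁ + c * u₂ = s := by
    simpa [hχ b hb.1, hχ c₁ hc₁, hχ c₂ hc₂] using congrArg χ hsum
  rcases hu₁.eq_or_lt with rfl | hu₁
  · exact ⟨0, le_rfl, by rw [h₁, zero_smul, zero_smul]⟩
  suffices c₁ = b from ⟨u₁, hu₁.le, by rw [h₁, this]⟩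
  have hs_pos : 0 < s := by rw [← hs]; positivity
  rcases hu₂.eq_or_lt with rfl | hu₂
  · rw [mul_zero, add_zero] at hs
    rw [mul_zero, zero_smul, add_zero, hs] at hsum
    exact smul_right_injective E hs_pos.ne' hsum
  refine hb.2 hc₁ hc₂ ⟨a * u₁ / s, c * u₂ / s, by positivity, by positivity, ?_, ?_⟩
  · rw [← add_div, hs, div_self hs_pos.ne']
  · rw [div_eq_inv_mul, div_eq_inv_mul, mul_smul, mul_smul (s⁻¹), ← smul_add, hsum, smul_smul,
      inv_mul_cancel₀ hs_pos.ne', one_smul]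

lemma exists_inter_ray_eq_segment [NormedAddCommGroup E] [NormedSpace ℝ E] {Δ : Set E}
    (hcomp : IsCompact Δ) (hconv : Convex ℝ Δ) {w b : E} (hb : b ≠ 0) (hw : w ∈ Δ) {t₀ : ℝ}
    (ht₀ : 0 < t₀) (hwt₀ : w + t₀ • b ∈ Δ) :
    ∃ T : ℝ, 0 < T ∧ {z ∈ Δ | ∃ s : ℝ, 0 ≤ s ∧ z - w = s • b} = segment ℝ w (w + T • b) := by
  set I := Ici 0 ∩ (fun s : ℝ => w + s • b) ⁻¹' Δ
  have hIcomp : IsCompact I :=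
    (((Homeomorph.addLeft w).isClosedEmbedding.comp
      (isClosedEmbedding_smul_left hb)).isCompact_preimage hcomp).inter_left isClosed_Ici
  have hIconv : Convex ℝ I := by
    refine (convex_Ici 0).inter fun s₁ hs₁ s₂ hs₂ a c ha hc hac => ?_
    show w + (a • s₁ + c • s₂) • b ∈ Δ
    convert hconv hs₁ hs₂ ha hc hac using 1
    match_scalars
    · linarith
    · simp
  have h0 : (0 : ℝ) ∈ I := ⟨mem_Ici.2 le_rfl, by simpa using hw⟩
  have ht₀I : t₀ ∈ I := ⟨ht₀.le, hwt₀⟩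
  set T := sSup I
  have hTI : T ∈ I := hIcomp.sSup_mem ⟨0, h0⟩
  have hIT : I = Icc 0 T := Subset.antisymm (fun s hs => ⟨hs.1, le_csSup hIcomp.bddAbove hs⟩)
    (hIconv.ordConnected.out h0 hTI)
  have hT : 0 < T := ht₀.trans_le (le_csSup hIcomp.bddAbove ht₀I)
  refine ⟨T, hT, Set.ext fun z => ?_⟩
  rw [segment_eq_image', mem_image]
  simp only [add_sub_cancel_left, smul_smul]
  constructor
  · rintro ⟨hz, s, hs, hzs⟩
    have hsI : s ∈ Icc 0 T := hIT ▸ ⟨hs, by simpa [← hzs] using hz⟩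
    refine ⟨s / T, ⟨div_nonneg hs hT.le, div_le_one_of_le₀ hsI.2 hT.le⟩, ?_⟩
    rw [div_mul_cancel₀ _ hT.ne', ← hzs, add_sub_cancel]
  · rintro ⟨θ, hθ, rfl⟩
    have hθT : θ * T ∈ I := hIT ▸ ⟨mul_nonneg hθ.1 hT.le, mul_le_of_le_one_left hT.le hθ.2⟩
    exact ⟨hθT.2, θ * T, hθT.1, add_sub_cancel_left _ _⟩

end VertexCone

section EdgeCone

variable {n : ℕ} {Δ : Set (Pt n)} {w : Pt n} {ι : Type*} {g : ι → Pt n}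

lemma IsEdge.isExtreme {e : Set (Pt n)} (he : IsEdge Δ e) : IsExtreme ℝ Δ e := by
  obtain ⟨-, -, -, -, h⟩ := he
  exact h

lemma mem_hull_of_mem_extremePoints_of_base (hcomp : IsCompact Δ) (hconv : Convex ℝ Δ)
    (hw : w ∈ Δ) (hedge : ∀ e, IsEdge Δ e → w ∈ e → ∃ i, e = segment ℝ w (w + g i))
    {B : Set (Pt n)} (χ : Pt n →ₗ[ℝ] ℝ) (hχ : ∀ c ∈ B, χ c = 1)
    (hcone : ∀ z ∈ Δ, ∃ t : ℝ, 0 ≤ t ∧ ∃ c ∈ B, z - w = t • c) {b : Pt n}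
    (hb : b ∈ B.extremePoints ℝ) {t₀ : ℝ} (ht₀ : 0 < t₀) (hwt₀ : w + t₀ • b ∈ Δ) :
    b ∈ PointedCone.hull ℝ (range g) := by
  have hb0 : b ≠ 0 := fun h => by simpa [h] using hχ b hb.1
  obtain ⟨T, hT, hray⟩ := exists_inter_ray_eq_segment hcomp hconv hb0 hw ht₀ hwt₀
  have hedgeT : IsEdge Δ (segment ℝ w (w + T • b)) := by
    refine ⟨w, w + T • b, ?_, rfl, hray ▸ isExtreme_inter_ray χ hχ hcone hb⟩
    simpa [hT.ne'] using hb0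
  obtain ⟨i, hi⟩ := hedge _ hedgeT (left_mem_segment ℝ _ _)
  obtain ⟨θ, hθ, hθb⟩ :=
    exists_smul_eq_of_add_mem_segment (hi ▸ right_mem_segment ℝ w (w + T • b))
  have hb_eq : b = (θ / T) • g i := by
    rw [div_eq_inv_mul, mul_smul, ← hθb, smul_smul, inv_mul_cancel₀ hT.ne', one_smul]
  exact hb_eq ▸ PointedCone.smul_mem _ (div_nonneg hθ.1 hT.le) (PointedCone.subset_hull ⟨i, rfl⟩)

theorem sub_mem_hull_of_forall_isEdge (hcomp : IsCompact Δ) (hconv : Convex ℝ Δ)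
    (hfin : (Δ.extremePoints ℝ).Finite) (hw : w ∈ Δ.extremePoints ℝ)
    (hedge : ∀ e, IsEdge Δ e → w ∈ e → ∃ i, e = segment ℝ w (w + g i)) {z : Pt n}
    (hz : z ∈ Δ) : z - w ∈ PointedCone.hull ℝ (range g) := by
  obtain ⟨χ, Y, hYfin, hY, hE⟩ := exists_vertexFigure hconv hfin hw
  have hχ : ∀ c ∈ convexHull ℝ Y, χ c = 1 := fun c hc =>
    convexHull_min (fun y hy => (hY y hy).1) (convex_hyperplane χ.isLinear 1) hc
  have hE_hull : ∀ p ∈ Δ.extremePoints ℝ, p ≠ w → p - w ∈ PointedCone.hull ℝ (range g) := by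
    intro p hp hpw
    obtain ⟨t, ht, y, hy, hpy⟩ := hE p hp hpw
    have hcone : ∀ z ∈ Δ, ∃ t : ℝ, 0 ≤ t ∧ ∃ c ∈ convexHull ℝ Y, z - w = t • c := by
      rw [← convexHull_extremePoints_of_finite hcomp hconv hfin]
      refine convexHull_min (fun q hq => ?_) ((convex_convexHull ℝ Y).convex_setOf_sub_eq_smul w)
      by_cases hqw : q = w
      · exact ⟨0, le_rfl, y, subset_convexHull ℝ Y hy, by simp [hqw]⟩
      · obtain ⟨s, hs, y', hy', hqy⟩ := hE q hq hqw
        exact ⟨s, hs.le, y', subset_convexHull ℝ Y hy', hqy⟩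
    have hBhull : convexHull ℝ Y ⊆ PointedCone.hull ℝ (range g) := by
      rw [← convexHull_extremePoints_of_finite (hYfin.isCompact_convexHull (𝕜 := ℝ))
        (convex_convexHull ℝ Y) (hYfin.subset extremePoints_convexHull_subset)]
      refine convexHull_min (fun b hb => ?_) (PointedCone.convex _)
      obtain ⟨s, hs, hbs⟩ := (hY b (extremePoints_convexHull_subset hb)).2
      exact mem_hull_of_mem_extremePoints_of_base hcomp hconv (extremePoints_subset hw) hedge
        χ hχ hcone hb hs hbs
    rw [hpy]
    exact PointedCone.smul_mem _ ht.le (hBhull (subset_convexHull ℝ Y hy))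
  rw [← convexHull_extremePoints_of_finite hcomp hconv hfin] at hz
  have hconvex : Convex ℝ ((· - w) ⁻¹' (PointedCone.hull ℝ (range g) : Set (Pt n))) := by
    simpa [sub_eq_add_neg] using (PointedCone.convex _).translate_preimage_left (-w)
  refine convexHull_min (fun q hq => ?_) hconvex hz
  by_cases hqw : q = w
  · simp [hqw]
  · exact hE_hull q hq hqw

end EdgeCone

lemma nontrivial_Icc_inter_of_isOpen {U : Set ℝ} (hU : IsOpen U) {a b t : ℝ} (hab : a < b)
    (ht : t ∈ Icc a b) (htU : t ∈ U) : (Icc a b ∩ U).Nontrivial := by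
  rcases ht.2.lt_or_eq with htb | rfl
  · obtain ⟨s, hts, hs⟩ := (Filter.Eventually.and (hU.mem_nhds htU) (Iio_mem_nhds htb)).exists_gt
    exact ⟨t, ⟨ht, htU⟩, s, ⟨⟨ht.1.trans hts.le, hs.2.le⟩, hs.1⟩, hts.ne⟩
  · obtain ⟨s, hst, hs⟩ := (Filter.Eventually.and (hU.mem_nhds htU) (Ioi_mem_nhds hab)).exists_lt
    exact ⟨t, ⟨ht, htU⟩, s, ⟨⟨hs.2.le, hst.le⟩, hs.1⟩, hst.ne'⟩

section Charts

variable {n : ℕ}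

structure SimplexChart (Δ : Set (Pt n)) (w : Pt n) (r : ℝ) (S : Set (Pt n)) where
  L : Pt n ≃ₗ[ℝ] Pt n
  radius_pos : 0 < r
  subset : S ⊆ Δ
  eq_image : S = (w + L ·) '' modelSimplex n r
  edge : ∀ i, ∃ e, IsEdge Δ e ∧ ∀ t ∈ Icc 0 r, w + t • L (stdVec i) ∈ e

lemma IsAGLZ.exists_linearEquiv {f : Pt n → Pt n} (hf : IsAGLZ f) :
    ∃ L : Pt n ≃ₗ[ℝ] Pt n, f = (f 0 + L ·) := by
  obtain ⟨A, b, hdet, hfA⟩ := hf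
  have hM : IsUnit (A.map (Int.cast : ℤ → ℝ)).det :=
    (RingHom.map_det (Int.castRingHom ℝ) A ▸ hdet.map _ :)
  refine ⟨(A.map (Int.cast : ℤ → ℝ)).toLinearEquiv' (Matrix.invertibleOfIsUnitDet _ hM),
    funext fun x => funext fun i => ?_⟩
  simp [hfA, Matrix.toLinearEquiv', Matrix.mulVec, dotProduct, add_comm]

lemma IsAdmissibleSimplex.nonempty_simplexChart {Δ S : Set (Pt n)} {w : Pt n} {r : ℝ}
    (h : IsAdmissibleSimplex Δ w r S) : Nonempty (SimplexChart Δ w r S) := by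
  obtain ⟨hr, hsub, f, hf, hf0, hedges, rfl⟩ := h
  obtain ⟨L, hfL⟩ := hf.exists_linearEquiv
  rw [hf0] at hfL
  refine ⟨L, hr, hsub, by rw [hfL], fun i => ?_⟩
  obtain ⟨e, he, -, hfe⟩ := hedges i
  refine ⟨e, he, fun t ⟨ht0, htr⟩ => hfe ⟨t • stdVec i, ?_, by simp [hfL]⟩⟩
  refine ⟨1 - t / r, t / r, by rw [sub_nonneg, div_le_one hr]; exact htr, by positivity,
    by ring, ?_⟩
  rw [smul_zero, zero_add, smul_smul, div_mul_cancel₀ _ hr.ne']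

namespace SimplexChart

section OneChart

variable {Δ S : Set (Pt n)} {w : Pt n} {r : ℝ} (G : SimplexChart Δ w r S)

def coord (z : Pt n) : Pt n := G.L.symm (z - w)

def level (z : Pt n) : ℝ := coordSum n (G.coord z)

def dir (i : Fin n) : Pt n := G.L (stdVec i)

lemma mem_image_iff {X : Set (Pt n)} {z : Pt n} : z ∈ (w + G.L ·) '' X ↔ G.coord z ∈ X := by
  constructor
  · rintro ⟨x, hx, rfl⟩
    simpa [coord] using hx
  · exact fun h => ⟨G.coord z, h, by simp [coord]⟩

lemma mem_iff {z : Pt n} : z ∈ S ↔ 0 ≤ G.coord z ∧ G.level z < r := by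
  conv_lhs => rw [G.eq_image]
  rw [G.mem_image_iff, modelSimplex_eq G.radius_pos]
  rfl

lemma mem_closure_iff {z : Pt n} : z ∈ closure S ↔ 0 ≤ G.coord z ∧ G.level z ≤ r := by
  let H : Pt n ≃ₜ Pt n := G.L.toContinuousLinearEquiv.toHomeomorph.trans (Homeomorph.addLeft w)
  have hH : closure S = (w + G.L ·) '' closedModelSimplex n r := by
    conv_lhs => rw [G.eq_image]
    rw [← closure_modelSimplex G.radius_pos]
    exact (H.image_closure _).symm
  rw [hH, G.mem_image_iff]
  rfl

lemma coord_add (z y : Pt n) : G.coord (z + y) = G.coord z + G.L.symm y := by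
  rw [coord, coord, add_sub_right_comm, map_add]

lemma level_add (z y : Pt n) : G.level (z + y) = G.level z + coordSum n (G.L.symm y) := by
  rw [level, level, coord_add, map_add]

@[simp]
lemma level_center : G.level w = 0 := by simp [level, coord]

lemma level_center_add (y : Pt n) :
    G.level (w + y) = coordSum n (G.L.symm y) := by
  rw [level_add, level_center, zero_add]

@[simp]
lemma symm_dir (i : Fin n) : G.L.symm (G.dir i) = stdVec i := G.L.symm_apply_apply _

lemma coord_center_add_smul_dir (t : ℝ) (i : Fin n) :
    G.coord (w + t • G.dir i) = t • stdVec i := by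
  simp [coord, dir]

lemma continuous_level : Continuous G.level :=
  continuous_coordSum.comp <| G.L.symm.toContinuousLinearEquiv.continuous.comp <|
    continuous_id.sub continuous_const

lemma center_add_smul_dir_mem_closure {t : ℝ} (ht : t ∈ Icc 0 r) (i : Fin n) :
    w + t • G.dir i ∈ closure S := by
  rw [G.mem_closure_iff, level, coord_center_add_smul_dir, map_smul, coordSum_stdVec]
  exact ⟨smul_nonneg ht.1 (stdVec_nonneg i), by simpa using ht.2⟩

lemma midpoint_mem {a b : Pt n} (ha : a ∈ closure S) (hb : b ∈ closure S)
    (hab : G.level a ≠ G.level b) : midpoint ℝ a b ∈ S := by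
  have hm : G.coord (midpoint ℝ a b) = (2⁻¹ : ℝ) • (G.coord a + G.coord b) := by
    simp only [coord, midpoint_eq_smul_add, invOf_eq_inv, ← map_add, ← map_smul]
    congr 1
    module
  obtain ⟨ha0, har⟩ := G.mem_closure_iff.1 ha
  obtain ⟨hb0, hbr⟩ := G.mem_closure_iff.1 hb
  rw [G.mem_iff, level, hm, map_smul, map_add]
  refine ⟨smul_nonneg (by norm_num) (add_nonneg ha0 hb0), ?_⟩
  change 2⁻¹ * (G.level a + G.level b) < r
  rcases hab.lt_or_gt with h | h <;> linarith

lemma dir_ne_zero (i : Fin n) : G.dir i ≠ 0 := fun h => by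
  simpa [stdVec] using congrFun (congrArg G.L.symm h) i

lemma eq_zero_of_smul_dir_eq {i j : Fin n} (hij : i ≠ j) {a b : ℝ}
    (h : a • G.dir i = b • G.dir j) : a = 0 := by
  simpa [stdVec, hij] using congrFun (congrArg G.L.symm h) i

lemma exists_sub_eq_smul_dir_of_mem_edge {i : Fin n} {e : Set (Pt n)} (he : IsEdge Δ e)
    (hie : ∀ t ∈ Icc 0 r, w + t • G.dir i ∈ e) {x : Pt n} (hx : x ∈ e) :
    ∃ c : ℝ, x - w = c • G.dir i := by
  obtain ⟨α, β, -, rfl, -⟩ := he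
  have hw := hie 0 ⟨le_rfl, G.radius_pos.le⟩
  rw [zero_smul, add_zero] at hw
  obtain ⟨s, hs⟩ := exists_sub_eq_smul_of_mem_segment hw (hie r ⟨G.radius_pos.le, le_rfl⟩)
  obtain ⟨t, ht⟩ := exists_sub_eq_smul_of_mem_segment hw hx
  have hs0 : s ≠ 0 := by
    rintro rfl
    rw [add_sub_cancel_left, zero_smul, smul_eq_zero] at hs
    exact hs.elim G.radius_pos.ne' (G.dir_ne_zero i)
  refine ⟨t / s * r, ?_⟩
  rw [ht, mul_smul, ← add_sub_cancel_left w (r • G.dir i), hs, smul_smul,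
    div_mul_cancel₀ _ hs0]

lemma mem_extremePoints_center (G : SimplexChart Δ w r S) (hn : 2 ≤ n) :
    w ∈ Δ.extremePoints ℝ := by
  let i₀ : Fin n := ⟨0, by omega⟩
  let i₁ : Fin n := ⟨1, by omega⟩
  have hi : i₀ ≠ i₁ := by simp [i₀, i₁, Fin.ext_iff]
  obtain ⟨e₀, he₀, hie₀⟩ := G.edge i₀
  obtain ⟨e₁, he₁, hie₁⟩ := G.edge i₁
  have hw : ∀ {e : Set (Pt n)} {i : Fin n}, (∀ t ∈ Icc 0 r, w + t • G.dir i ∈ e) → w ∈ e :=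
    fun h => by simpa using h 0 ⟨le_rfl, G.radius_pos.le⟩
  have hinter : e₀ ∩ e₁ = {w} := by
    refine Subset.antisymm (fun x ⟨hx₀, hx₁⟩ => ?_) (singleton_subset_iff.2 ⟨hw hie₀, hw hie₁⟩)
    obtain ⟨c₀, hc₀⟩ := G.exists_sub_eq_smul_dir_of_mem_edge he₀ hie₀ hx₀
    obtain ⟨c₁, hc₁⟩ := G.exists_sub_eq_smul_dir_of_mem_edge he₁ hie₁ hx₁
    have := G.eq_zero_of_smul_dir_eq hi (hc₀.symm.trans hc₁)
    rw [this, zero_smul, sub_eq_zero] at hc₀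
    exact hc₀
  exact isExtreme_singleton.1 (hinter ▸ he₀.isExtreme.inter he₁.isExtreme)

lemma exists_edge_vectors_eq_pos_smul_dir (hΔ : IsDelzant Δ) (hn : 2 ≤ n) :
    ∃ g : Fin n → Pt n, (∀ e, IsEdge Δ e → w ∈ e → ∃ k, e = segment ℝ w (w + g k)) ∧
      ∀ k, ∃ i, ∃ c : ℝ, 0 < c ∧ g k = c • G.dir i := by
  obtain ⟨u, t, -, -, -, hcompl⟩ := hΔ.2.2.2.2.2 w (G.mem_extremePoints_center hn)
  refine ⟨fun k => t k • ivec (u k), hcompl, ?_⟩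
  have hmatch : ∀ i, ∃ k, ∃ c : ℝ, 0 < c ∧ t k • ivec (u k) = c • G.dir i := by
    intro i
    obtain ⟨e, he, hie⟩ := G.edge i
    obtain ⟨k, rfl⟩ := hcompl e he (by simpa using hie 0 ⟨le_rfl, G.radius_pos.le⟩)
    obtain ⟨θ, hθ, hθk⟩ := exists_smul_eq_of_add_mem_segment (hie r ⟨G.radius_pos.le, le_rfl⟩)
    have hθ0 : θ ≠ 0 := by
      rintro rfl
      rw [zero_smul, smul_eq_zero] at hθk
      exact hθk.elim G.radius_pos.ne' (G.dir_ne_zero i)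
    refine ⟨k, r / θ, div_pos G.radius_pos (hθ.1.lt_of_ne' hθ0), ?_⟩
    rw [div_eq_inv_mul, mul_smul, dir, hθk, smul_smul, inv_mul_cancel₀ hθ0, one_smul]
  choose κ c hc hκ using hmatch
  have hκinj : Function.Injective κ := fun i j hij => by
    by_contra hne
    have h : c i • G.dir i = c j • G.dir j := by rw [← hκ i, ← hκ j, hij]
    exact (hc i).ne' (G.eq_zero_of_smul_dir_eq hne h)
  intro k
  obtain ⟨i, rfl⟩ := (Finite.injective_iff_bijective.1 hκinj).2 k
  exact ⟨i, c i, hc i, hκ i⟩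

lemma coord_nonneg_of_mem (hΔ : IsDelzant Δ) (hn : 2 ≤ n) {z : Pt n} (hz : z ∈ Δ) :
    0 ≤ G.coord z := by
  obtain ⟨g, hedge, hg⟩ := G.exists_edge_vectors_eq_pos_smul_dir hΔ hn
  have hle : PointedCone.hull ℝ (range g) ≤
      (PointedCone.positive ℝ (Pt n)).comap G.L.symm.toLinearMap := by
    refine Submodule.span_le.2 (range_subset_iff.2 fun k => ?_)
    obtain ⟨i, c, hc, hk⟩ := hg k
    simp only [SetLike.mem_coe, PointedCone.mem_comap, PointedCone.mem_positive, hk,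
      LinearEquiv.coe_coe, map_smul, symm_dir]
    exact smul_nonneg hc.le (stdVec_nonneg i)
  exact hle (sub_mem_hull_of_forall_isEdge hΔ.1 hΔ.2.1 hΔ.2.2.2.1
    (G.mem_extremePoints_center hn) hedge hz)

end OneChart

section TwoCharts

variable {Δ S₀ S : Set (Pt n)} {v w : Pt n} {r₀ r : ℝ}

lemma level_lt_or_level_lt_of_mem_edge (G : SimplexChart Δ w r S) {e : Set (Pt n)}
    (he : IsEdge Δ e) (hwe : w ∈ e) {a b : Pt n} (ha : a ∈ closure S ∩ e)
    (hb : b ∈ closure S ∩ e) (hab : a ≠ b) : G.level a < r ∨ G.level b < r := by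
  by_contra! h
  obtain ⟨α, β, -, rfl, -⟩ := he
  obtain ⟨s, hs⟩ := exists_sub_eq_smul_of_mem_segment hwe ha.2
  obtain ⟨s', hs'⟩ := exists_sub_eq_smul_of_mem_segment hwe hb.2
  have hlevel : ∀ {x : Pt n} {t : ℝ}, x - w = t • (β - α) →
      G.level x = t * coordSum n (G.L.symm (β - α)) := fun {x t} hx => by
    rw [← add_sub_cancel w x, hx, level_center_add, map_smul, map_smul, smul_eq_mul]
  have ha_r := le_antisymm (G.mem_closure_iff.1 ha.1).2 h.1
  have hb_r := le_antisymm (G.mem_closure_iff.1 hb.1).2 h.2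
  rw [hlevel hs] at ha_r
  rw [hlevel hs'] at hb_r
  have hK : coordSum n (G.L.symm (β - α)) ≠ 0 := fun h0 => by
    rw [h0, mul_zero] at ha_r
    exact G.radius_pos.ne ha_r
  refine hab (sub_left_inj.1 (hs.trans (hs'.trans ?_).symm))
  rw [mul_right_cancel₀ hK (ha_r.trans hb_r.symm)]

lemma inter_nonempty_of_mem_closure (G₀ : SimplexChart Δ v r₀ S₀)
    (hΔ : ∀ z ∈ Δ, 0 ≤ G₀.coord z) (hS : S ⊆ Δ) {a : Pt n} (ha : a ∈ closure S)
    (hlt : G₀.level a < r₀) : (S₀ ∩ S).Nonempty := by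
  -- `S₀ = Δ ∩ {level < r₀}` is relatively open in `Δ`
  obtain ⟨q, hq, hqS⟩ := mem_closure_iff_nhds.1 ha _
    ((isOpen_lt G₀.continuous_level continuous_const).mem_nhds hlt)
  exact ⟨q, G₀.mem_iff.2 ⟨hΔ q (hS hqS), hq⟩, hqS⟩

lemma level_lt_or_exists_level_lt (G₀ : SimplexChart Δ v r₀ S₀) (G : SimplexChart Δ w r S)
    {p : Pt n} (hp₀ : p ∈ S₀) (hp : p ∈ S) :
    G.level v < r ∨ ∃ j, G.level (v + r₀ • G₀.dir j) < r := by
  -- an affine function attains its minimum over `cl S₀` at a vertex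
  by_contra! h
  obtain ⟨hx, hxr⟩ := G₀.mem_iff.1 hp₀
  set x := G₀.coord p
  set γ := fun j => coordSum n (G.L.symm (G₀.dir j))
  have hp_eq : p = v + ∑ j, x j • G₀.dir j := by
    simp only [dir, ← map_smul, ← map_sum, sum_smul_stdVec, x, coord,
      LinearEquiv.apply_symm_apply, add_sub_cancel]
  have hlevel : G.level p = G.level v + ∑ j, x j * γ j := by
    rw [hp_eq, level_add, map_sum, map_sum]
    simp [γ]
  have hγ : ∀ j, r - G.level v ≤ r₀ * γ j := fun j => by
    have := h.2 j
    rw [level_add, map_smul, map_smul, smul_eq_mul] at this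
    linarith
  have hsum : coordSum n x * (r - G.level v) ≤ ∑ j, x j * (r₀ * γ j) := by
    rw [coordSum_apply, Finset.sum_mul]
    exact Finset.sum_le_sum fun j _ => mul_le_mul_of_nonneg_left (hγ j) (hx j)
  have hxr' : r₀ * (r - G.level v) ≤ coordSum n x * (r - G.level v) :=
    mul_le_mul_of_nonpos_right hxr.le (sub_nonpos.2 h.1)
  have : r₀ * r ≤ r₀ * G.level p := by
    rw [hlevel, mul_add, Finset.mul_sum]
    have hswap : ∑ j, r₀ * (x j * γ j) = ∑ j, x j * (r₀ * γ j) :=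
      Finset.sum_congr rfl fun j _ => by ring
    linarith
  exact (G.mem_iff.1 hp).2.not_ge (le_of_mul_le_mul_left this G₀.radius_pos)

lemma exists_isEdge_nontrivial (G₀ : SimplexChart Δ v r₀ S₀) (G : SimplexChart Δ w r S)
    (hΔ : ∀ z ∈ Δ, 0 ≤ G.coord z) {j : Fin n} {t₀ : ℝ} (ht₀ : t₀ ∈ Icc 0 r₀)
    (hlt : G.level (v + t₀ • G₀.dir j) < r) :
    ∃ e, IsEdge Δ e ∧ v ∈ e ∧ (closure S₀ ∩ closure S ∩ e).Nontrivial := by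
  obtain ⟨e, he, hje⟩ := G₀.edge j
  refine ⟨e, he, by simpa using hje 0 ⟨le_rfl, G₀.radius_pos.le⟩, ?_⟩
  have hU : IsOpen {t : ℝ | G.level (v + t • G₀.dir j) < r} :=
    isOpen_lt (G.continuous_level.comp (continuous_const.add
      (continuous_id.smul continuous_const))) continuous_const
  have hinj : Function.Injective fun t : ℝ => v + t • G₀.dir j := fun s t h =>
    smul_left_injective ℝ (G₀.dir_ne_zero j) (add_left_cancel h)
  refine ((nontrivial_Icc_inter_of_isOpen hU G₀.radius_pos ht₀ hlt).image hinj).mono ?_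
  rintro _ ⟨t, ⟨ht, htU⟩, rfl⟩
  have hte : v + t • G₀.dir j ∈ e := hje t ht
  exact ⟨⟨G₀.center_add_smul_dir_mem_closure ht j,
    G.mem_closure_iff.2 ⟨hΔ _ (he.isExtreme.subset hte), le_of_lt htU⟩⟩, hte⟩

theorem disjoint_iff_of_two_le (G₀ : SimplexChart Δ v r₀ S₀) (G : SimplexChart Δ w r S)
    (hΔ : IsDelzant Δ) (hn : 2 ≤ n) :
    Disjoint S₀ S ↔ ∀ e, IsEdge Δ e → v ∈ e → (closure S₀ ∩ closure S ∩ e).Subsingleton := by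
  rw [← not_iff_not, not_disjoint_iff_nonempty_inter]
  simp only [not_forall, not_subsingleton_iff, exists_prop]
  constructor
  · rintro ⟨p, hp₀, hp⟩
    obtain ⟨j, t₀, ht₀, hlt⟩ : ∃ j t₀, t₀ ∈ Icc 0 r₀ ∧ G.level (v + t₀ • G₀.dir j) < r := by
      rcases G₀.level_lt_or_exists_level_lt G hp₀ hp with h | ⟨j, h⟩
      · exact ⟨⟨0, by omega⟩, 0, ⟨le_rfl, G₀.radius_pos.le⟩, by simpa using h⟩
      · exact ⟨j, r₀, ⟨G₀.radius_pos.le, le_rfl⟩, h⟩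
    exact G₀.exists_isEdge_nontrivial G (fun z => G.coord_nonneg_of_mem hΔ hn) ht₀ hlt
  · rintro ⟨e, he, hve, a, ha, b, hb, hab⟩
    have hΔ₀ : ∀ z ∈ Δ, 0 ≤ G₀.coord z := fun z => G₀.coord_nonneg_of_mem hΔ hn
    rcases G₀.level_lt_or_level_lt_of_mem_edge he hve ⟨ha.1.1, ha.2⟩ ⟨hb.1.1, hb.2⟩ hab with h | h
    · exact G₀.inter_nonempty_of_mem_closure hΔ₀ G.subset ha.1.2 h
    · exact G₀.inter_nonempty_of_mem_closure hΔ₀ G.subset hb.1.2 h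

end TwoCharts

section DimOne

variable {Δ S₀ S : Set (Pt 1)} {v w : Pt 1} {r₀ r : ℝ}

lemma coord_eq_level_smul (G : SimplexChart Δ w r S) (z : Pt 1) :
    G.coord z = G.level z • stdVec 0 := by
  ext i
  fin_cases i
  simp [level, coordSum_apply, stdVec]

lemma level_injective (G : SimplexChart Δ w r S) : Function.Injective G.level := fun a b h => by
  have h' : G.coord a = G.coord b := by rw [coord_eq_level_smul, coord_eq_level_smul, h]
  simpa [coord] using h'

lemma coord_nonneg_iff (G : SimplexChart Δ w r S) {z : Pt 1} :
    0 ≤ G.coord z ↔ 0 ≤ G.level z := by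
  simp [coord_eq_level_smul, Pi.le_def, stdVec]

lemma closure_subset_of_edge (G : SimplexChart Δ w r S) {e : Set (Pt 1)}
    (hie : ∀ t ∈ Icc 0 r, w + t • G.dir 0 ∈ e) : closure S ⊆ e := fun z hz => by
  obtain ⟨h0, hr⟩ := G.mem_closure_iff.1 hz
  have hz : z = w + G.level z • G.dir 0 := by
    rw [dir, ← map_smul, ← coord_eq_level_smul, coord, LinearEquiv.apply_symm_apply,
      add_sub_cancel]
  rw [hz]
  exact hie _ ⟨G.coord_nonneg_iff.1 h0, hr⟩

lemma inter_nonempty_of_ne (G₀ : SimplexChart Δ v r₀ S₀) (G : SimplexChart Δ w r S)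
    {a b : Pt 1} (ha : a ∈ closure S₀ ∩ closure S) (hb : b ∈ closure S₀ ∩ closure S)
    (hab : a ≠ b) : (S₀ ∩ S).Nonempty :=
  ⟨midpoint ℝ a b, G₀.midpoint_mem ha.1 hb.1 (G₀.level_injective.ne hab),
    G.midpoint_mem ha.2 hb.2 (G.level_injective.ne hab)⟩

lemma nontrivial_closure_inter_of_ne_center (G₀ : SimplexChart Δ v r₀ S₀)
    (G : SimplexChart Δ w r S) {p : Pt 1} (hp₀ : p ∈ S₀) (hp : p ∈ S) (hpw : p ≠ w) :
    (closure S₀ ∩ closure S).Nontrivial := by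
  -- `p` lies in the interior of `S`, so `S` contains the points `p + ε • G₀.dir 0` for small `ε`
  obtain ⟨hp₀0, hp₀r⟩ := G₀.mem_iff.1 hp₀
  obtain ⟨hp0, hpr⟩ := G.mem_iff.1 hp
  have hpos : 0 < G.level p := (G.coord_nonneg_iff.1 hp0).lt_of_ne fun h =>
    hpw (G.level_injective (h.symm.trans G.level_center.symm))
  set q : ℝ → Pt 1 := fun ε => p + ε • G₀.dir 0
  have hq₀ : ∀ ε, G₀.level (q ε) = G₀.level p + ε := by simp [q, level_add]
  have hcont : Continuous fun ε => G.level (q ε) :=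
    G.continuous_level.comp (continuous_const.add (continuous_id.smul continuous_const))
  have hU : IsOpen {ε | 0 < G.level (q ε) ∧ G.level (q ε) < r ∧ G₀.level p + ε < r₀} :=
    (isOpen_lt continuous_const hcont).inter ((isOpen_lt hcont continuous_const).inter
      (isOpen_lt (continuous_const.add continuous_id) continuous_const))
  have h0 : (0 : ℝ) ∈ {ε | 0 < G.level (q ε) ∧ G.level (q ε) < r ∧ G₀.level p + ε < r₀} := by
    simpa [q] using ⟨hpos, hpr, hp₀r⟩
  obtain ⟨ε, hε, hqpos, hqr, hq₀r⟩ := Filter.Eventually.exists_gt (hU.mem_nhds h0)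
  refine ⟨p, ⟨subset_closure hp₀, subset_closure hp⟩, q ε, ⟨?_, ?_⟩, ?_⟩
  · rw [G₀.mem_closure_iff, G₀.coord_nonneg_iff, hq₀]
    exact ⟨by linarith [G₀.coord_nonneg_iff.1 hp₀0], by linarith⟩
  · exact G.mem_closure_iff.2 ⟨G.coord_nonneg_iff.2 hqpos.le, hqr.le⟩
  · refine fun h => G₀.dir_ne_zero 0 (smul_right_injective _ hε.ne' ?_)
    simpa [q] using h.symm

theorem disjoint_iff_of_dim_one (G₀ : SimplexChart Δ v r₀ S₀) (G : SimplexChart Δ w r S)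
    (hvw : v ≠ w) :
    Disjoint S₀ S ↔ ∀ e, IsEdge Δ e → v ∈ e → (closure S₀ ∩ closure S ∩ e).Subsingleton := by
  rw [← not_iff_not, not_disjoint_iff_nonempty_inter]
  simp only [not_forall, not_subsingleton_iff, exists_prop]
  constructor
  · rintro ⟨p, hp₀, hp⟩
    obtain ⟨e, he, hie⟩ := G₀.edge 0
    have hnt : (closure S₀ ∩ closure S).Nontrivial := by
      by_cases hpw : p = w
      · rw [inter_comm]
        exact G.nontrivial_closure_inter_of_ne_center G₀ hp hp₀ (hpw ▸ hvw.symm)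
      · exact G₀.nontrivial_closure_inter_of_ne_center G hp₀ hp hpw
    exact ⟨e, he, by simpa using hie 0 ⟨le_rfl, G₀.radius_pos.le⟩,
      hnt.mono fun z hz => ⟨hz, G₀.closure_subset_of_edge hie hz.1⟩⟩
  · rintro ⟨e, -, -, a, ha, b, hb, hab⟩
    exact G₀.inter_nonempty_of_ne G ha.1 hb.1 hab

end DimOne

theorem disjoint_iff_forall_isEdge {Δ S₀ S : Set (Pt n)} {v w : Pt n} {r₀ r : ℝ}
    (G₀ : SimplexChart Δ v r₀ S₀) (G : SimplexChart Δ w r S) (hΔ : IsDelzant Δ) (hvw : v ≠ w) :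
    Disjoint S₀ S ↔ ∀ e, IsEdge Δ e → v ∈ e → (closure S₀ ∩ closure S ∩ e).Subsingleton := by
  rcases lt_or_ge n 2 with hn | hn
  · interval_cases n
    · exact absurd (Subsingleton.elim v w) hvw
    · exact G₀.disjoint_iff_of_dim_one G hvw
  · exact G₀.disjoint_iff_of_two_le G hΔ hn

end SimplexChart

end Charts

/-- **Disjointness condition.** Let `Δ ⊆ ℝⁿ` be a Delzant polytope and `𝒮`
a finite family of admissible simplices in `Δ` with pairwise distinct centers `c`.  Fix
`S₀ ∈ 𝒮` with center `v = c S₀`.  Then `S₀` is disjoint from every other member of `𝒮` if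
and only if for every other member `S` and every edge `e` of `Δ` meeting `v`, the set
`cl(S₀) ∩ cl(S) ∩ e` contains at most one point. -/
theorem disjointness_condition {n : ℕ} (Δ : Set (Pt n)) (hΔ : IsDelzant Δ)
    (𝒮 : Finset (Set (Pt n))) (c : Set (Pt n) → Pt n) (rad : Set (Pt n) → ℝ)
    (hadm : ∀ S ∈ 𝒮, IsAdmissibleSimplex Δ (c S) (rad S) S)
    (hcinj : Set.InjOn c ↑𝒮)
    (S₀ : Set (Pt n)) (hS₀ : S₀ ∈ 𝒮) :
    (∀ S ∈ 𝒮, S ≠ S₀ → Disjoint S₀ S) ↔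
    (∀ S ∈ 𝒮, S ≠ S₀ → ∀ e, IsEdge Δ e → c S₀ ∈ e →
      (closure S₀ ∩ closure S ∩ e).Subsingleton) := by
  obtain ⟨G₀⟩ := (hadm S₀ hS₀).nonempty_simplexChart
  refine forall₂_congr fun S hS => imp_congr_right fun hne => ?_
  obtain ⟨G⟩ := (hadm S hS).nonempty_simplexChart
  exact G₀.disjoint_iff_forall_isEdge G hΔ fun h => hne (hcinj hS hS₀ h.symm)
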